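/- arXiv:1809.01970 — 9 statements merged into one kernel-verified Lean document; each statement's English description precedes it below -/
import Mathlib

section
/- For every nonempty subset Γ of the feasible set Σ, the componentwise supremum x* of Γ (defined by x*_i = sup{x_i : x ∈ Γ} for each i) exists, belongs to Σ, and is the least upper bound of Γ within Σ: x* ≥ y for all y ∈ Γ, and any z ∈ Σ with z ≥ y for all y ∈ Γ satisfies z ≥ x*. -/
/-- For every nonempty subset `Γ` of the feasible set
`Σ = {z : a ≤ z ≤ g z}` (with `g` continuous and monotone nondecreasing,
and `Σ` bounded above by `U`), the componentwise supremum `x*` of `Γ`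
belongs to `Σ` and is the least upper bound of `Γ` within `Σ`. -/
theorem componentwise_sup_mem_and_lub (n : ℕ) (a : Fin n → ℝ)
    (g : (Fin n → ℝ) → (Fin n → ℝ)) (hg_cont : Continuous g) (hg_mono : Monotone g)
    (U : Fin n → ℝ) (hU : ∀ z ∈ {z : Fin n → ℝ | a ≤ z ∧ z ≤ g z}, g z ≤ U)
    (Γ : Set (Fin n → ℝ)) (hΓ : Γ.Nonempty)
    (hsub : Γ ⊆ {z : Fin n → ℝ | a ≤ z ∧ z ≤ g z}) :
    (fun i => sSup ((fun x => x i) '' Γ)) ∈ {z : Fin n → ℝ | a ≤ z ∧ z ≤ g z} ∧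
    (∀ y ∈ Γ, y ≤ fun i => sSup ((fun x => x i) '' Γ)) ∧
    (∀ z ∈ {z : Fin n → ℝ | a ≤ z ∧ z ≤ g z}, (∀ y ∈ Γ, y ≤ z) →
      (fun i => sSup ((fun x => x i) '' Γ)) ≤ z) := by
  obtain ⟨y0, hy0⟩ := hΓ
  set x : Fin n → ℝ := fun i => sSup ((fun x => x i) '' Γ) with hx
  have hbdd : ∀ i, BddAbove ((fun x => x i) '' Γ) := by
    intro i
    refine ⟨U i, ?_⟩
    rintro _ ⟨z, hz, rfl⟩
    exact le_trans ((hsub hz).2 i) (hU z (hsub hz) i)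
  have hub : ∀ y ∈ Γ, y ≤ x := by
    intro y hy i
    exact le_csSup (hbdd i) ⟨y, hy, rfl⟩
  have hlub : ∀ z : Fin n → ℝ, (∀ y ∈ Γ, y ≤ z) → x ≤ z := by
    intro z hz i
    refine csSup_le ⟨y0 i, y0, hy0, rfl⟩ ?_
    rintro _ ⟨y, hy, rfl⟩
    exact hz y hy i
  refine ⟨⟨?_, ?_⟩, hub, fun z _ hz => hlub z hz⟩
  · exact le_trans (hsub hy0).1 (hub y0 hy0)
  · exact hlub (g x) (fun y hy => le_trans (hsub hy).2 (hg_mono (hub y hy)))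
end

section
/- Assume a ≤ g(a), so that a ∈ Σ. Then Σ, equipped with the componentwise partial order, is a complete lattice: every subset Γ ⊆ Σ possesses a least upper bound within Σ (an element s ∈ Σ with s ≥ y for all y ∈ Γ and s ≤ z for every z ∈ Σ that is an upper bound of Γ) and a greatest lower bound within Σ (an element m ∈ Σ with m ≤ y for all y ∈ Γ and m ≥ z for every z ∈ Σ that is a lower bound of Γ). -/
/-- Auxiliary lemma: the pointwise supremum of a nonempty subset `T` of the
feasible set `Σ = {z | a ≤ z ∧ z ≤ g z}` is again in `Σ`, is an upper bound of
`T`, and is below every upper bound of `T`. -/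
lemma feasible_pointwise_sup (n : ℕ) (a : Fin n → ℝ)
    (g : (Fin n → ℝ) → (Fin n → ℝ)) (hg_mono : Monotone g)
    (U : Fin n → ℝ) (hU : ∀ z ∈ {z : Fin n → ℝ | a ≤ z ∧ z ≤ g z}, g z ≤ U)
    (T : Set (Fin n → ℝ)) (hT : T ⊆ {z : Fin n → ℝ | a ≤ z ∧ z ≤ g z})
    (hne : T.Nonempty) :
    ∃ s ∈ {z : Fin n → ℝ | a ≤ z ∧ z ≤ g z},
      (∀ z ∈ T, z ≤ s) ∧ (∀ w, (∀ z ∈ T, z ≤ w) → s ≤ w) := by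
  set s : Fin n → ℝ := fun i => sSup ((fun z => z i) '' T) with hs
  have hbdd : ∀ i, BddAbove ((fun z => z i) '' T) := by
    intro i
    refine ⟨U i, ?_⟩
    rintro x ⟨z, hz, rfl⟩
    exact le_trans ((hT hz).2 i) (hU z (hT hz) i)
  have hne' : ∀ i, ((fun z => z i) '' T).Nonempty := fun i => hne.image _
  have hub : ∀ z ∈ T, z ≤ s := by
    intro z hz i
    exact le_csSup (hbdd i) ⟨z, hz, rfl⟩
  have hlub : ∀ w, (∀ z ∈ T, z ≤ w) → s ≤ w := by
    intro w hw i
    refine csSup_le (hne' i) ?_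
    rintro x ⟨z, hz, rfl⟩
    exact hw z hz i
  obtain ⟨z0, hz0⟩ := hne
  refine ⟨s, ⟨le_trans (hT hz0).1 (hub z0 hz0), ?_⟩, hub, hlub⟩
  intro i
  refine csSup_le (hne' i) ?_
  rintro x ⟨z, hz, rfl⟩
  exact le_trans ((hT hz).2 i) (hg_mono (hub z hz) i)

/-- Assuming `a ≤ g a`, the feasible set `Σ = {z : a ≤ z ≤ g z}` with the
componentwise partial order is a complete lattice: every subset `Γ ⊆ Σ` has a
least upper bound within `Σ` and a greatest lower bound within `Σ`. -/
theorem feasible_set_complete_lattice (n : ℕ) (a : Fin n → ℝ)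
    (g : (Fin n → ℝ) → (Fin n → ℝ)) (hg_cont : Continuous g) (hg_mono : Monotone g)
    (U : Fin n → ℝ) (hU : ∀ z ∈ {z : Fin n → ℝ | a ≤ z ∧ z ≤ g z}, g z ≤ U)
    (ha : a ≤ g a)
    (Γ : Set (Fin n → ℝ)) (hsub : Γ ⊆ {z : Fin n → ℝ | a ≤ z ∧ z ≤ g z}) :
    (∃ s ∈ {z : Fin n → ℝ | a ≤ z ∧ z ≤ g z},
      (∀ y ∈ Γ, y ≤ s) ∧
      (∀ z ∈ {z : Fin n → ℝ | a ≤ z ∧ z ≤ g z}, (∀ y ∈ Γ, y ≤ z) → s ≤ z)) ∧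
    (∃ m ∈ {z : Fin n → ℝ | a ≤ z ∧ z ≤ g z},
      (∀ y ∈ Γ, m ≤ y) ∧
      (∀ z ∈ {z : Fin n → ℝ | a ≤ z ∧ z ≤ g z}, (∀ y ∈ Γ, z ≤ y) → z ≤ m)) := by
  have haS : a ∈ {z : Fin n → ℝ | a ≤ z ∧ z ≤ g z} := ⟨le_refl a, ha⟩
  constructor
  · -- supremum: pointwise sup of `insert a Γ`
    obtain ⟨s, hsS, hub, hlub⟩ := feasible_pointwise_sup n a g hg_mono U hU
      (insert a Γ) (by
        intro z hz
        rcases hz with rfl | hz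
        · exact haS
        · exact hsub hz) ⟨a, Set.mem_insert a Γ⟩
    refine ⟨s, hsS, fun y hy => hub y (Set.mem_insert_of_mem a hy), ?_⟩
    intro z hzS hz
    refine hlub z ?_
    rintro w (rfl | hw)
    · exact hzS.1
    · exact hz w hw
  · -- infimum: pointwise sup of the set of lower bounds of `Γ` within `Σ`
    obtain ⟨m, hmS, hub, hlub⟩ := feasible_pointwise_sup n a g hg_mono U hU
      {z ∈ {z : Fin n → ℝ | a ≤ z ∧ z ≤ g z} | ∀ y ∈ Γ, z ≤ y}
      (fun z hz => hz.1) ⟨a, haS, fun y hy => (hsub hy).1⟩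
    refine ⟨m, hmS, ?_, ?_⟩
    · intro y hy
      exact hlub y (fun z hz => hz.2 y hy)
    · intro z hzS hz
      exact hub z ⟨hzS, hz⟩
end

section
/- Assume a ≤ g(a). Let x⁺ be the componentwise supremum of Σ, i.e. (x⁺)_i = sup{x_i : x ∈ Σ} for each i. Then x⁺ ∈ Σ and x⁺ is a fixed point of g: g(x⁺) = x⁺. -/
/-- Assuming `a ≤ g a`, the componentwise supremum `x⁺` of the feasible set
`Σ = {z : a ≤ z ≤ g z}` belongs to `Σ` and is a fixed point of `g`. -/
theorem componentwise_sup_is_fixed_point (n : ℕ) (a : Fin n → ℝ)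
    (g : (Fin n → ℝ) → (Fin n → ℝ)) (hg_cont : Continuous g) (hg_mono : Monotone g)
    (U : Fin n → ℝ) (hU : ∀ z ∈ {z : Fin n → ℝ | a ≤ z ∧ z ≤ g z}, g z ≤ U)
    (ha : a ≤ g a) :
    (fun i => sSup ((fun x => x i) '' {z : Fin n → ℝ | a ≤ z ∧ z ≤ g z})) ∈
      {z : Fin n → ℝ | a ≤ z ∧ z ≤ g z} ∧
    g (fun i => sSup ((fun x => x i) '' {z : Fin n → ℝ | a ≤ z ∧ z ≤ g z})) =
      (fun i => sSup ((fun x => x i) '' {z : Fin n → ℝ | a ≤ z ∧ z ≤ g z})) := by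
  set S := {z : Fin n → ℝ | a ≤ z ∧ z ≤ g z} with hS
  have haS : a ∈ S := ⟨le_refl a, ha⟩
  have hbdd : ∀ i, BddAbove ((fun x => x i) '' S) := by
    intro i
    exact ⟨U i, by rintro _ ⟨z, hz, rfl⟩; exact (hz.2.trans (hU z hz)) i⟩
  set x := fun i => sSup ((fun x => x i) '' S) with hx
  have hub : ∀ z ∈ S, z ≤ x := fun z hz i => le_csSup (hbdd i) ⟨z, hz, rfl⟩
  have hlub : ∀ b : Fin n → ℝ, (∀ z ∈ S, z ≤ b) → x ≤ b := by
    intro b hb i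
    exact csSup_le ⟨a i, a, haS, rfl⟩ (by rintro _ ⟨z, hz, rfl⟩; exact hb z hz i)
  have hxS : x ∈ S := by
    refine ⟨hub a haS, hlub (g x) ?_⟩
    intro z hz
    exact hz.2.trans (hg_mono (hub z hz))
  refine ⟨hxS, le_antisymm ?_ hxS.2⟩
  exact hub (g x) ⟨hxS.1.trans hxS.2, hg_mono hxS.2⟩
end

section
/- Suppose there exists δ > 0 such that for all x, y ∈ ℝⁿ with x ≥ a, y ≥ a and x ≠ y, the ratio ‖g(x) − g(y)‖∞ / ‖x − y‖∞ does not belong to the interval [1 − δ, 1 + δ]. Let x⁺ ≥ a be a fixed point of g (g(x⁺) = x⁺). Then for any ε > 0, every ε-solution x (i.e., x ≥ a and ‖x − g(x)‖∞ ≤ ε) satisfies ‖x − x⁺‖∞ ≤ ε/δ. -/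
/-! Since `g p = p`, the distances `‖g x - p‖` and `‖x - p‖` differ by at most `‖x - g x‖ ≤ ε`,
whereas a ratio outside `[1 - δ, 1 + δ]` makes them differ by more than `δ ‖x - p‖`. -/

open Set

lemma mul_lt_abs_sub_of_div_notMem_Icc {N d δ : ℝ} (hd : 0 < d)
    (h : N / d ∉ Icc (1 - δ) (1 + δ)) : δ * d < |N - d| := by
  have hdist : δ < |N / d - 1| := by
    by_contra! hle
    exact h ⟨by linarith [neg_abs_le (N / d - 1)], by linarith [le_abs_self (N / d - 1)]⟩
  rwa [div_sub_one hd.ne', abs_div, abs_of_pos hd, lt_div_iff₀ hd] at hdist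

theorem norm_sub_le_div_of_ratio_notMem_Icc {E : Type*} [NormedAddCommGroup E] {g : E → E}
    {p x : E} {δ ε : ℝ} (hp : g p = p) (hδ : 0 < δ) (hx : ‖x - g x‖ ≤ ε)
    (hratio : x ≠ p → ‖g x - g p‖ / ‖x - p‖ ∉ Icc (1 - δ) (1 + δ)) :
    ‖x - p‖ ≤ ε / δ := by
  rw [le_div_iff₀' hδ]
  rcases eq_or_ne x p with rfl | hxp
  · simpa using (norm_nonneg _).trans hx
  have hd : 0 < ‖x - p‖ := norm_pos_iff.2 (sub_ne_zero.2 hxp)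
  have hgap : |‖g x - p‖ - ‖x - p‖| ≤ ε := by
    calc |‖g x - p‖ - ‖x - p‖| ≤ ‖(g x - p) - (x - p)‖ := abs_norm_sub_norm_le _ _
      _ = ‖x - g x‖ := by rw [sub_sub_sub_cancel_right, norm_sub_rev]
      _ ≤ ε := hx
  have hfar := mul_lt_abs_sub_of_div_notMem_Icc hd (hp ▸ hratio hxp)
  linarith

theorem eps_solution_close_to_fixed_point_general (n : ℕ) (a : Fin n → ℝ)
    (g : (Fin n → ℝ) → (Fin n → ℝ)) (δ : ℝ) (hδ : 0 < δ)
    (hratio : ∀ x y : Fin n → ℝ, a ≤ x → a ≤ y → x ≠ y →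
      ‖g x - g y‖ / ‖x - y‖ ∉ Set.Icc (1 - δ) (1 + δ))
    (xplus : Fin n → ℝ) (hxplus_ge : a ≤ xplus) (hfix : g xplus = xplus)
    (ε : ℝ)
    (x : Fin n → ℝ) (hx_ge : a ≤ x) (hx_sol : ‖x - g x‖ ≤ ε) :
    ‖x - xplus‖ ≤ ε / δ :=
  norm_sub_le_div_of_ratio_notMem_Icc hfix hδ hx_sol (hratio x xplus hx_ge hxplus_ge)

/-- If for some `δ > 0` the ratio `‖g x − g y‖∞ / ‖x − y‖∞` never lies in
`[1 − δ, 1 + δ]` for distinct `x, y ≥ a`, and `x⁺ ≥ a` is a fixed point of `g`,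
then every `ε`-solution `x` (i.e. `x ≥ a` and `‖x − g x‖∞ ≤ ε`) satisfies
`‖x − x⁺‖∞ ≤ ε / δ`. Here the norm on `Fin n → ℝ` is the sup norm. -/
theorem eps_solution_close_to_fixed_point (n : ℕ) (a : Fin n → ℝ)
    (g : (Fin n → ℝ) → (Fin n → ℝ)) (δ : ℝ) (hδ : 0 < δ)
    (hratio : ∀ x y : Fin n → ℝ, a ≤ x → a ≤ y → x ≠ y →
      ‖g x - g y‖ / ‖x - y‖ ∉ Set.Icc (1 - δ) (1 + δ))
    (xplus : Fin n → ℝ) (hxplus_ge : a ≤ xplus) (hfix : g xplus = xplus)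
    (ε : ℝ) (hε : 0 < ε)
    (x : Fin n → ℝ) (hx_ge : a ≤ x) (hx_sol : ‖x - g x‖ ≤ ε) :
    ‖x - xplus‖ ≤ ε / δ :=
  eps_solution_close_to_fixed_point_general n a g δ hδ hratio xplus hxplus_ge hfix ε x hx_ge hx_sol
end

section
/- For each ℓ, the matrix Â_ℓ = P_ℓ⁻¹(A_ℓ − D_ℓ) has nonnegative entries and zero diagonal, and the vector b̂_ℓ = P_ℓ⁻¹ b_ℓ is nonnegative. Moreover, for every x ∈ ℝⁿ, the constraint x ≤ glb_{ℓ∈L}{A_ℓ x + b_ℓ} holds if and only if x ≤ glb_{ℓ∈L}{Â_ℓ x + b̂_ℓ} holds, where glb denotes the componentwise minimum over ℓ (i.e., [glb_{ℓ}{v_ℓ}]_i = min_{ℓ} [v_ℓ]_i). -/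
open Matrix

/-- For each `ℓ`, the matrix `Â_ℓ = P_ℓ⁻¹ (A_ℓ − D_ℓ)` is nonnegative with zero
diagonal, the vector `b̂_ℓ = P_ℓ⁻¹ b_ℓ` is nonnegative, and for every `x`, the
constraint `x ≤ glb_ℓ (A_ℓ x + b_ℓ)` holds iff `x ≤ glb_ℓ (Â_ℓ x + b̂_ℓ)` holds,
where the greatest lower bound over `ℓ` is taken componentwise. -/
theorem reformulation_equivalence (n L : ℕ) (hL : 1 ≤ L)
    (A : Fin L → Matrix (Fin n) (Fin n) ℝ) (b : Fin L → Fin n → ℝ)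
    (hA : ∀ ℓ i j, 0 ≤ A ℓ i j) (hAdiag : ∀ ℓ i, A ℓ i i < 1)
    (hb : ∀ ℓ i, 0 ≤ b ℓ i)
    (D : Fin L → Matrix (Fin n) (Fin n) ℝ)
    (hD : ∀ ℓ, D ℓ = Matrix.diagonal (fun i => A ℓ i i))
    (P : Fin L → Matrix (Fin n) (Fin n) ℝ) (hP : ∀ ℓ, P ℓ = 1 - D ℓ)
    (Ahat : Fin L → Matrix (Fin n) (Fin n) ℝ)
    (hAhat : ∀ ℓ, Ahat ℓ = (P ℓ)⁻¹ * (A ℓ - D ℓ))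
    (bhat : Fin L → Fin n → ℝ) (hbhat : ∀ ℓ, bhat ℓ = (P ℓ)⁻¹ *ᵥ b ℓ) :
    (∀ ℓ i j, 0 ≤ Ahat ℓ i j) ∧ (∀ ℓ i, Ahat ℓ i i = 0) ∧
    (∀ ℓ i, 0 ≤ bhat ℓ i) ∧
    (∀ x : Fin n → ℝ,
      (∀ i, x i ≤ ⨅ ℓ, (A ℓ *ᵥ x + b ℓ) i) ↔
      (∀ i, x i ≤ ⨅ ℓ, (Ahat ℓ *ᵥ x + bhat ℓ) i)) := by
  haveI : Nonempty (Fin L) := Fin.pos_iff_nonempty.mp hL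
  have hpos : ∀ ℓ i, (0:ℝ) < 1 - A ℓ i i := fun ℓ i => by
    have := hAdiag ℓ i; linarith
  have hPdiag : ∀ ℓ, P ℓ = diagonal (fun i => 1 - A ℓ i i) := by
    intro ℓ
    rw [hP, hD, ← Matrix.diagonal_one, Matrix.diagonal_sub]
  have hPinv : ∀ ℓ, (P ℓ)⁻¹ = diagonal (fun i => (1 - A ℓ i i)⁻¹) := by
    intro ℓ
    apply Matrix.inv_eq_right_inv
    rw [hPdiag, Matrix.diagonal_mul_diagonal]
    have : (fun i => (1 - A ℓ i i) * (1 - A ℓ i i)⁻¹) = fun _ => (1:ℝ) :=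
      funext fun i => mul_inv_cancel₀ (ne_of_gt (hpos ℓ i))
    rw [this, Matrix.diagonal_one]
  have hAhat' : ∀ ℓ i j, Ahat ℓ i j = (1 - A ℓ i i)⁻¹ * (A ℓ i j - D ℓ i j) := by
    intro ℓ i j
    rw [hAhat, hPinv, Matrix.diagonal_mul]
    simp [Matrix.sub_apply]
  have hbhat' : ∀ ℓ i, bhat ℓ i = (1 - A ℓ i i)⁻¹ * b ℓ i := by
    intro ℓ i
    rw [hbhat, hPinv, Matrix.mulVec_diagonal]
  have h1 : ∀ ℓ i j, 0 ≤ Ahat ℓ i j := by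
    intro ℓ i j
    rw [hAhat' ℓ i j, hD]
    rcases eq_or_ne i j with rfl | h
    · simp
    · rw [Matrix.diagonal_apply_ne _ h, sub_zero]
      exact mul_nonneg (inv_nonneg.mpr (hpos ℓ i).le) (hA ℓ i j)
  have h2 : ∀ ℓ i, Ahat ℓ i i = 0 := by
    intro ℓ i
    rw [hAhat' ℓ i i, hD]
    simp
  have h3 : ∀ ℓ i, 0 ≤ bhat ℓ i := by
    intro ℓ i
    rw [hbhat' ℓ i]
    exact mul_nonneg (inv_nonneg.mpr (hpos ℓ i).le) (hb ℓ i)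
  refine ⟨h1, h2, h3, ?_⟩
  have key : ∀ (x : Fin n → ℝ) ℓ i,
      x i ≤ (A ℓ *ᵥ x + b ℓ) i ↔ x i ≤ (Ahat ℓ *ᵥ x + bhat ℓ) i := by
    intro x ℓ i
    have hS : (Ahat ℓ *ᵥ x) i
        = (1 - A ℓ i i)⁻¹ * ((A ℓ *ᵥ x) i - A ℓ i i * x i) := by
      rw [hAhat, ← Matrix.mulVec_mulVec, hPinv, Matrix.mulVec_diagonal,
        Matrix.sub_mulVec, Pi.sub_apply, hD, Matrix.mulVec_diagonal]
    have hc := hpos ℓ i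
    rw [Pi.add_apply, Pi.add_apply, hS, hbhat' ℓ i,
      show (1 - A ℓ i i)⁻¹ * ((A ℓ *ᵥ x) i - A ℓ i i * x i)
          + (1 - A ℓ i i)⁻¹ * b ℓ i
        = ((A ℓ *ᵥ x) i + b ℓ i - A ℓ i i * x i) / (1 - A ℓ i i) from by ring,
      le_div_iff₀ hc]
    constructor <;> intro h <;> nlinarith [h, hc]
  intro x
  have bdd1 : ∀ i, BddBelow (Set.range fun ℓ => (A ℓ *ᵥ x + b ℓ) i) :=
    fun i => (Set.finite_range _).bddBelow
  have bdd2 : ∀ i, BddBelow (Set.range fun ℓ => (Ahat ℓ *ᵥ x + bhat ℓ) i) :=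
    fun i => (Set.finite_range _).bddBelow
  constructor
  · intro h i
    rw [le_ciInf_iff (bdd2 i)]
    intro ℓ
    exact (key x ℓ i).mp ((le_ciInf_iff (bdd1 i)).mp (h i) ℓ)
  · intro h i
    rw [le_ciInf_iff (bdd1 i)]
    intro ℓ
    exact (key x ℓ i).mpr ((le_ciInf_iff (bdd2 i)).mp (h i) ℓ)
end

section
/- Define ĝ(x) componentwise by ĝ(x)_i = min( min_{ℓ∈L} (Â_ℓ x + b̂_ℓ)_i , U_i ) and ḡ(x)_i = min( min_{ℓ∈L} (A_ℓ x + b_ℓ)_i , U_i ). Then the feasible set Σ = {x ∈ ℝⁿ : 0 ≤ x ≤ ĝ(x)} contains 0 (so the problem is feasible), and its componentwise supremum x⁺ satisfies both fixed point equations x⁺ = ĝ(x⁺) and x⁺ = ḡ(x⁺). -/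
open Matrix

/-- With `ĝ(x)_i = min(min_ℓ (Â_ℓ x + b̂_ℓ)_i, U_i)` and
`ḡ(x)_i = min(min_ℓ (A_ℓ x + b_ℓ)_i, U_i)`, the feasible set
`Σ = {x : 0 ≤ x ≤ ĝ x}` contains `0`, and its componentwise supremum `x⁺`
satisfies both fixed point equations `x⁺ = ĝ x⁺` and `x⁺ = ḡ x⁺`. -/
theorem feasibility_and_fixed_point_equations (n L : ℕ) (hL : 1 ≤ L)
    (A : Fin L → Matrix (Fin n) (Fin n) ℝ) (b : Fin L → Fin n → ℝ) (U : Fin n → ℝ)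
    (hA : ∀ ℓ i j, 0 ≤ A ℓ i j) (hAdiag : ∀ ℓ i, A ℓ i i < 1)
    (hb : ∀ ℓ i, 0 ≤ b ℓ i) (hU : ∀ i, 0 ≤ U i)
    (D : Fin L → Matrix (Fin n) (Fin n) ℝ)
    (hD : ∀ ℓ, D ℓ = Matrix.diagonal (fun i => A ℓ i i))
    (P : Fin L → Matrix (Fin n) (Fin n) ℝ) (hP : ∀ ℓ, P ℓ = 1 - D ℓ)
    (Ahat : Fin L → Matrix (Fin n) (Fin n) ℝ)
    (hAhat : ∀ ℓ, Ahat ℓ = (P ℓ)⁻¹ * (A ℓ - D ℓ))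
    (bhat : Fin L → Fin n → ℝ) (hbhat : ∀ ℓ, bhat ℓ = (P ℓ)⁻¹ *ᵥ b ℓ)
    (ghat gbar : (Fin n → ℝ) → (Fin n → ℝ))
    (hghat : ∀ x i, ghat x i = min (⨅ ℓ, (Ahat ℓ *ᵥ x + bhat ℓ) i) (U i))
    (hgbar : ∀ x i, gbar x i = min (⨅ ℓ, (A ℓ *ᵥ x + b ℓ) i) (U i))
    (xplus : Fin n → ℝ)
    (hxplus : xplus = fun i =>
      sSup ((fun x => x i) '' {x : Fin n → ℝ | 0 ≤ x ∧ x ≤ ghat x})) :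
    (0 : Fin n → ℝ) ∈ {x : Fin n → ℝ | 0 ≤ x ∧ x ≤ ghat x} ∧
    xplus = ghat xplus ∧ xplus = gbar xplus := by
  haveI : Nonempty (Fin L) := ⟨⟨0, hL⟩⟩
  set Sig := {x : Fin n → ℝ | 0 ≤ x ∧ x ≤ ghat x} with hSig
  set c : Fin L → Fin n → ℝ := fun ℓ i => (1 - A ℓ i i)⁻¹ with hc
  have hpos : ∀ ℓ i, 0 < 1 - A ℓ i i := fun ℓ i => by linarith [hAdiag ℓ i]
  have hcpos : ∀ ℓ i, 0 < c ℓ i := fun ℓ i => inv_pos.mpr (hpos ℓ i)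
  have hPd : ∀ ℓ, P ℓ = Matrix.diagonal (fun i => 1 - A ℓ i i) := by
    intro ℓ
    rw [hP, hD, ← Matrix.diagonal_one, Matrix.diagonal_sub]
  have hPinv : ∀ ℓ, (P ℓ)⁻¹ = Matrix.diagonal (c ℓ) := by
    intro ℓ
    apply Matrix.inv_eq_right_inv
    rw [hPd, Matrix.diagonal_mul_diagonal]
    have h1 : (fun i => (1 - A ℓ i i) * c ℓ i) = (1 : Fin n → ℝ) := by
      funext i; exact mul_inv_cancel₀ (ne_of_gt (hpos ℓ i))
    rw [h1]; exact Matrix.diagonal_one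
  -- key formula for the hat functions
  have hform : ∀ ℓ (x : Fin n → ℝ) i,
      (Ahat ℓ *ᵥ x + bhat ℓ) i = c ℓ i * ((A ℓ *ᵥ x + b ℓ) i - A ℓ i i * x i) := by
    intro ℓ x i
    rw [hAhat, hbhat, hPinv, ← Matrix.mulVec_mulVec]
    simp only [Pi.add_apply, Matrix.mulVec_diagonal, Matrix.sub_mulVec, Pi.sub_apply,
      hD, Matrix.mulVec_diagonal]
    ring
  -- key difference identity
  have hdiff : ∀ ℓ (x : Fin n → ℝ) i,
      (Ahat ℓ *ᵥ x + bhat ℓ) i - x i = c ℓ i * ((A ℓ *ᵥ x + b ℓ) i - x i) := by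
    intro ℓ x i
    rw [hform]
    have h1 : c ℓ i * (1 - A ℓ i i) = 1 := inv_mul_cancel₀ (ne_of_gt (hpos ℓ i))
    linear_combination x i * h1
  -- nonnegativity of Ahat entries
  have hAhat_nonneg : ∀ ℓ i j, 0 ≤ Ahat ℓ i j := by
    intro ℓ i j
    rw [hAhat, hPinv, Matrix.diagonal_mul, Matrix.sub_apply, hD]
    rcases eq_or_ne i j with rfl | hij
    · simp
    · rw [Matrix.diagonal_apply_ne _ hij, sub_zero]
      exact mul_nonneg (hcpos ℓ i).le (hA ℓ i j)
  have hbhat_nonneg : ∀ ℓ i, 0 ≤ bhat ℓ i := by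
    intro ℓ i
    rw [hbhat, hPinv, Matrix.mulVec_diagonal]
    exact mul_nonneg (le_of_lt (hcpos ℓ i)) (hb ℓ i)
  -- monotonicity of ghat
  have hmono : ∀ x y : Fin n → ℝ, x ≤ y → ghat x ≤ ghat y := by
    intro x y hxy i
    rw [hghat, hghat]
    apply min_le_min _ le_rfl
    apply le_ciInf
    intro ℓ
    refine le_trans (ciInf_le (Set.Finite.bddBelow (Set.finite_range _)) ℓ) ?_
    simp only [Pi.add_apply]
    have : (Ahat ℓ *ᵥ x) i ≤ (Ahat ℓ *ᵥ y) i := by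
      simp only [Matrix.mulVec, dotProduct]
      exact Finset.sum_le_sum fun j _ =>
        mul_le_mul_of_nonneg_left (hxy j) (hAhat_nonneg ℓ i j)
    linarith
  -- 0 is feasible
  have h0mem : (0 : Fin n → ℝ) ∈ Sig := by
    constructor
    · exact le_rfl
    · intro i
      rw [hghat]
      refine le_min (le_ciInf fun ℓ => ?_) (hU i)
      simp only [Matrix.mulVec_zero, Pi.add_apply, Pi.zero_apply, zero_add]
      exact hbhat_nonneg ℓ i
  -- members are bounded by U
  have hmemU : ∀ x ∈ Sig, ∀ i, x i ≤ U i := by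
    intro x hx i
    exact le_trans (hx.2 i) (by rw [hghat]; exact min_le_right _ _)
  have hbdd : ∀ i, BddAbove ((fun x => x i) '' Sig) :=
    fun i => ⟨U i, by rintro _ ⟨x, hx, rfl⟩; exact hmemU x hx i⟩
  have hne : ∀ i, ((fun x => x i) '' Sig).Nonempty :=
    fun i => ⟨0, 0, h0mem, rfl⟩
  have hle_xplus : ∀ x ∈ Sig, x ≤ xplus := by
    intro x hx i
    rw [hxplus]
    exact le_csSup (hbdd i) ⟨x, hx, rfl⟩
  have hxplus_ub : ∀ (y : Fin n → ℝ), (∀ x ∈ Sig, x ≤ y) → xplus ≤ y := by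
    intro y hy i
    rw [hxplus]
    exact csSup_le (hne i) (by rintro _ ⟨x, hx, rfl⟩; exact hy x hx i)
  -- xplus ≤ ghat xplus
  have hfix1 : xplus ≤ ghat xplus := by
    apply hxplus_ub
    intro x hx
    exact le_trans hx.2 (hmono x xplus (hle_xplus x hx))
  have hxplus_nonneg : (0 : Fin n → ℝ) ≤ xplus := hle_xplus 0 h0mem
  have hgmem : ghat xplus ∈ Sig := by
    constructor
    · exact le_trans h0mem.2 (hmono 0 xplus hxplus_nonneg)
    · exact hmono xplus (ghat xplus) hfix1
  have hfix : xplus = ghat xplus :=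
    le_antisymm hfix1 (hle_xplus _ hgmem)
  refine ⟨h0mem, hfix, ?_⟩
  -- now show xplus = gbar xplus
  funext i
  have hxi : xplus i = min (⨅ ℓ, (Ahat ℓ *ᵥ xplus + bhat ℓ) i) (U i) := by
    conv_lhs => rw [hfix, hghat]
  rw [hgbar]
  have hle_bar : ∀ ℓ, xplus i ≤ (A ℓ *ᵥ xplus + b ℓ) i := by
    intro ℓ
    have h1 : xplus i ≤ (Ahat ℓ *ᵥ xplus + bhat ℓ) i := by
      rw [hxi]
      exact le_trans (min_le_left _ _) (ciInf_le (Set.Finite.bddBelow (Set.finite_range _)) ℓ)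
    have h2 := hdiff ℓ xplus i
    nlinarith [hcpos ℓ i]
  -- find a minimizer of the hat infimum
  obtain ⟨ℓ₀, hℓ₀⟩ := Finite.exists_min (fun ℓ => (Ahat ℓ *ᵥ xplus + bhat ℓ) i)
  have hinf_eq : (⨅ ℓ, (Ahat ℓ *ᵥ xplus + bhat ℓ) i) = (Ahat ℓ₀ *ᵥ xplus + bhat ℓ₀) i :=
    le_antisymm (ciInf_le (Set.Finite.bddBelow (Set.finite_range _)) ℓ₀) (le_ciInf hℓ₀)
  apply le_antisymm
  · exact le_min (le_ciInf hle_bar) (by rw [hxi]; exact min_le_right _ _)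
  · rcases le_total ((Ahat ℓ₀ *ᵥ xplus + bhat ℓ₀) i) (U i) with h | h
    · have hx_eq : xplus i = (Ahat ℓ₀ *ᵥ xplus + bhat ℓ₀) i := by
        rw [hxi, hinf_eq, min_eq_left h]
      have h2 := hdiff ℓ₀ xplus i
      have hbar_eq : (A ℓ₀ *ᵥ xplus + b ℓ₀) i = xplus i := by
        have hc0 : c ℓ₀ i ≠ 0 := ne_of_gt (hcpos ℓ₀ i)
        have : c ℓ₀ i * ((A ℓ₀ *ᵥ xplus + b ℓ₀) i - xplus i) = 0 := by
          rw [← h2, ← hx_eq]; ring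
        have := mul_eq_zero.mp this
        rcases this with h' | h'
        · exact absurd h' hc0
        · linarith
      refine le_trans (min_le_left _ _) ?_
      rw [← hbar_eq]
      exact ciInf_le (Set.Finite.bddBelow (Set.finite_range _)) ℓ₀
    · have hx_eq : xplus i = U i := by
        rw [hxi, hinf_eq, min_eq_right h]
      rw [hx_eq]
      exact min_le_right _ _
end

section
/- Let γ ∈ [0,1) and suppose each A_ℓ has nonnegative entries with every row sum at most γ (so in particular each diagonal entry (A_ℓ)_{ii} ≤ γ < 1). Set γ̂ = max over ℓ ∈ L and i ∈ {1,…,n} of (γ − (A_ℓ)_{ii}) / (1 − (A_ℓ)_{ii}), and define ĝ : ℝⁿ → ℝⁿ componentwise by ĝ(x)_i = min( min_{ℓ∈L} (Â_ℓ x + b̂_ℓ)_i , U_i ). Then ĝ is a contraction in the sup norm with constant γ̂: for all x, y ∈ ℝⁿ, ‖ĝ(x) − ĝ(y)‖∞ ≤ γ̂ ‖x − y‖∞; moreover γ̂ ≤ γ. -/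
open Matrix

/-- If `γ ∈ [0,1)` and each `A_ℓ` is nonnegative with every row sum at most
`γ`, then with `γ̂ = max_{ℓ,i} (γ − (A_ℓ)_{ii})/(1 − (A_ℓ)_{ii})`, the map
`ĝ(x)_i = min(min_ℓ (Â_ℓ x + b̂_ℓ)_i, U_i)` is a contraction in the sup norm
with constant `γ̂`, and `γ̂ ≤ γ`. -/
theorem ghat_contraction (n L : ℕ) (hn : 1 ≤ n) (hL : 1 ≤ L)
    (γ : ℝ) (hγ : γ ∈ Set.Ico (0:ℝ) 1)
    (A : Fin L → Matrix (Fin n) (Fin n) ℝ) (b : Fin L → Fin n → ℝ) (U : Fin n → ℝ)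
    (hA : ∀ ℓ i j, 0 ≤ A ℓ i j) (hArow : ∀ ℓ i, ∑ j, A ℓ i j ≤ γ)
    (D : Fin L → Matrix (Fin n) (Fin n) ℝ)
    (hD : ∀ ℓ, D ℓ = Matrix.diagonal (fun i => A ℓ i i))
    (P : Fin L → Matrix (Fin n) (Fin n) ℝ) (hP : ∀ ℓ, P ℓ = 1 - D ℓ)
    (Ahat : Fin L → Matrix (Fin n) (Fin n) ℝ)
    (hAhat : ∀ ℓ, Ahat ℓ = (P ℓ)⁻¹ * (A ℓ - D ℓ))
    (bhat : Fin L → Fin n → ℝ) (hbhat : ∀ ℓ, bhat ℓ = (P ℓ)⁻¹ *ᵥ b ℓ)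
    (γhat : ℝ)
    (hγhat : γhat = ⨆ p : Fin L × Fin n, (γ - A p.1 p.2 p.2) / (1 - A p.1 p.2 p.2))
    (ghat : (Fin n → ℝ) → (Fin n → ℝ))
    (hghat : ∀ x i, ghat x i = min (⨅ ℓ, (Ahat ℓ *ᵥ x + bhat ℓ) i) (U i)) :
    (∀ x y : Fin n → ℝ, ‖ghat x - ghat y‖ ≤ γhat * ‖x - y‖) ∧ γhat ≤ γ := by
  obtain ⟨hγ0, hγ1⟩ := hγ
  haveI : NeZero n := ⟨by omega⟩
  haveI : NeZero L := ⟨by omega⟩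
  have haA : ∀ ℓ i, A ℓ i i ≤ γ := fun ℓ i =>
    le_trans (Finset.single_le_sum (f := fun j => A ℓ i j) (fun j _ => hA ℓ i j)
      (Finset.mem_univ i)) (hArow ℓ i)
  have h1a : ∀ ℓ i, 0 < 1 - A ℓ i i := fun ℓ i => by have := haA ℓ i; linarith
  -- inverse of P
  have hPinv : ∀ ℓ, (P ℓ)⁻¹ = Matrix.diagonal (fun i => (1 - A ℓ i i)⁻¹) := by
    intro ℓ
    apply Matrix.inv_eq_right_inv
    rw [hP ℓ, hD ℓ]
    rw [show (1 : Matrix (Fin n) (Fin n) ℝ) = Matrix.diagonal (fun _ => 1) from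
      Matrix.diagonal_one.symm]
    rw [Matrix.diagonal_sub, Matrix.diagonal_mul_diagonal]
    have h : (fun i => (1 - A ℓ i i) * (1 - A ℓ i i)⁻¹) = fun _ : Fin n => (1:ℝ) :=
      funext fun i => mul_inv_cancel₀ (h1a ℓ i).ne'
    rw [h]
  -- entries of Ahat
  have hAhatE : ∀ ℓ i j, Ahat ℓ i j
      = (1 - A ℓ i i)⁻¹ * (A ℓ i j - if i = j then A ℓ i i else 0) := by
    intro ℓ i j
    rw [hAhat, hPinv]
    simp [Matrix.mul_apply, Matrix.diagonal_apply, hD, Matrix.sub_apply, ite_mul,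
      Finset.sum_ite_eq]
  have hAhat_nonneg : ∀ ℓ i j, 0 ≤ Ahat ℓ i j := by
    intro ℓ i j
    rw [hAhatE]
    apply mul_nonneg (le_of_lt (inv_pos.mpr (h1a ℓ i)))
    by_cases h : i = j
    · subst h; simp
    · simp [h, hA ℓ i j]
  have bdd : BddAbove (Set.range fun p : Fin L × Fin n =>
      (γ - A p.1 p.2 p.2) / (1 - A p.1 p.2 p.2)) :=
    Set.Finite.bddAbove (Set.finite_range _)
  have hterm_le : ∀ ℓ i, (γ - A ℓ i i) / (1 - A ℓ i i) ≤ γhat := by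
    intro ℓ i
    rw [hγhat]
    exact le_ciSup bdd (⟨ℓ, i⟩ : Fin L × Fin n)
  have hγhat_nonneg : 0 ≤ γhat := by
    refine le_trans ?_ (hterm_le default default)
    exact div_nonneg (by linarith [haA default default]) (le_of_lt (h1a default default))
  -- row sums of Ahat
  have hrow : ∀ ℓ i, ∑ j, Ahat ℓ i j ≤ γhat := by
    intro ℓ i
    refine le_trans ?_ (hterm_le ℓ i)
    have : ∑ j, Ahat ℓ i j
        = (1 - A ℓ i i)⁻¹ * ((∑ j, A ℓ i j) - A ℓ i i) := by
      simp only [hAhatE, ← Finset.mul_sum]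
      congr 1
      rw [Finset.sum_sub_distrib]
      simp [Finset.sum_ite_eq]
    rw [this, div_eq_inv_mul]
    apply mul_le_mul_of_nonneg_left _ (le_of_lt (inv_pos.mpr (h1a ℓ i)))
    linarith [hArow ℓ i]
  -- key componentwise bound
  have key : ∀ (ℓ : Fin L) (x y : Fin n → ℝ) (i : Fin n),
      |(Ahat ℓ *ᵥ x + bhat ℓ) i - (Ahat ℓ *ᵥ y + bhat ℓ) i| ≤ γhat * ‖x - y‖ := by
    intro ℓ x y i
    have hre : (Ahat ℓ *ᵥ x + bhat ℓ) i - (Ahat ℓ *ᵥ y + bhat ℓ) i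
        = ∑ j, Ahat ℓ i j * (x j - y j) := by
      simp [Matrix.mulVec, dotProduct, mul_sub, Finset.sum_sub_distrib]
    rw [hre]
    calc |∑ j, Ahat ℓ i j * (x j - y j)| ≤ ∑ j, |Ahat ℓ i j * (x j - y j)| :=
          Finset.abs_sum_le_sum_abs _ _
      _ ≤ ∑ j, Ahat ℓ i j * ‖x - y‖ := by
          refine Finset.sum_le_sum fun j _ => ?_
          rw [abs_mul, abs_of_nonneg (hAhat_nonneg ℓ i j)]
          refine mul_le_mul_of_nonneg_left ?_ (hAhat_nonneg ℓ i j)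
          have := norm_le_pi_norm (x - y) j
          simpa [Real.norm_eq_abs] using this
      _ = (∑ j, Ahat ℓ i j) * ‖x - y‖ := (Finset.sum_mul _ _ _).symm
      _ ≤ γhat * ‖x - y‖ := mul_le_mul_of_nonneg_right (hrow ℓ i) (norm_nonneg _)
  -- inf lemma
  have inf_half : ∀ (f g : Fin L → ℝ) (c : ℝ), (∀ ℓ, f ℓ - g ℓ ≤ c) →
      (⨅ ℓ, f ℓ) - (⨅ ℓ, g ℓ) ≤ c := by
    intro f g c h
    obtain ⟨ℓ0, _, hmin⟩ := Finset.exists_min_image Finset.univ g ⟨default, Finset.mem_univ _⟩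
    have h1 : (⨅ ℓ, f ℓ) ≤ f ℓ0 := ciInf_le (Set.Finite.bddBelow (Set.finite_range f)) ℓ0
    have h2 : g ℓ0 ≤ ⨅ ℓ, g ℓ := le_ciInf fun ℓ => hmin ℓ (Finset.mem_univ ℓ)
    have := h ℓ0
    linarith
  refine ⟨fun x y => ?_, ?_⟩
  · rw [pi_norm_le_iff_of_nonneg (mul_nonneg hγhat_nonneg (norm_nonneg _))]
    intro i
    rw [Pi.sub_apply, Real.norm_eq_abs, hghat, hghat]
    set a := ⨅ ℓ, (Ahat ℓ *ᵥ x + bhat ℓ) i with ha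
    set b' := ⨅ ℓ, (Ahat ℓ *ᵥ y + bhat ℓ) i with hb'
    have habs : |a - b'| ≤ γhat * ‖x - y‖ := by
      rw [abs_sub_le_iff]
      constructor
      · exact inf_half _ _ _ fun ℓ => by
          have := key ℓ x y i; rw [abs_sub_le_iff] at this; exact this.1
      · exact inf_half _ _ _ fun ℓ => by
          have := key ℓ x y i; rw [abs_sub_le_iff] at this; exact this.2
    -- |min a u - min b' u| ≤ |a - b'|
    have hmin : |min a (U i) - min b' (U i)| ≤ |a - b'| := by
      have := abs_min_sub_min_le_max a (U i) b' (U i)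
      simpa using this
    exact le_trans hmin habs
  · rw [hγhat]
    refine ciSup_le fun p => ?_
    rw [div_le_iff₀ (h1a p.1 p.2)]
    nlinarith [hA p.1 p.2 p.2, haA p.1 p.2]
end

section
/- Let c ≥ 0 and suppose each A_ℓ has nonnegative entries with every diagonal entry (A_ℓ)_{ii} ≥ c. Let y ∈ ℝⁿ satisfy y ≤ A_ℓ y + b_ℓ (componentwise) for every ℓ ∈ L, and let x ∈ ℝⁿ satisfy x ≥ y. Define h(x) componentwise by h(x)_i = min_{ℓ∈L} (A_ℓ x + b_ℓ)_i. Then ‖h(x) − y‖∞ ≥ c ‖x − y‖∞. -/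
open Matrix

/-- If each `A_ℓ` is nonnegative with all diagonal entries at least `c ≥ 0`,
`y` satisfies `y ≤ A_ℓ y + b_ℓ` for every `ℓ`, and `x ≥ y`, then the map
`h(x)_i = min_ℓ (A_ℓ x + b_ℓ)_i` satisfies `‖h(x) − y‖∞ ≥ c ‖x − y‖∞`. -/
theorem lower_bound_componentwise_min (n L : ℕ) (hL : 1 ≤ L)
    (c : ℝ) (hc : 0 ≤ c)
    (A : Fin L → Matrix (Fin n) (Fin n) ℝ) (b : Fin L → Fin n → ℝ)
    (hA : ∀ ℓ i j, 0 ≤ A ℓ i j) (hAdiag : ∀ ℓ i, c ≤ A ℓ i i)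
    (y : Fin n → ℝ) (hy : ∀ ℓ, y ≤ A ℓ *ᵥ y + b ℓ)
    (x : Fin n → ℝ) (hx : y ≤ x)
    (h : (Fin n → ℝ) → (Fin n → ℝ))
    (hh : ∀ z i, h z i = ⨅ ℓ, (A ℓ *ᵥ z + b ℓ) i) :
    c * ‖x - y‖ ≤ ‖h x - y‖ := by
  have hLne : Nonempty (Fin L) := ⟨⟨0, hL⟩⟩
  have key : ∀ i, c * (x i - y i) ≤ h x i - y i := by
    intro i
    rw [hh]
    have hle : c * (x i - y i) + y i ≤ ⨅ ℓ, (A ℓ *ᵥ x + b ℓ) i := by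
      apply le_ciInf
      intro ℓ
      have hsum : ∑ j, A ℓ i j * x j - ∑ j, A ℓ i j * y j
          = ∑ j, A ℓ i j * (x j - y j) := by
        rw [← Finset.sum_sub_distrib]
        exact Finset.sum_congr rfl fun j _ => (mul_sub _ _ _).symm
      have h1 : c * (x i - y i) ≤ ∑ j, A ℓ i j * (x j - y j) := by
        calc c * (x i - y i) ≤ A ℓ i i * (x i - y i) :=
              mul_le_mul_of_nonneg_right (hAdiag ℓ i) (sub_nonneg.2 (hx i))
          _ ≤ ∑ j, A ℓ i j * (x j - y j) :=
              Finset.single_le_sum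
                (fun j _ => mul_nonneg (hA ℓ i j) (sub_nonneg.2 (hx j)))
                (Finset.mem_univ i)
      have h2 := hy ℓ i
      simp only [Pi.add_apply, mulVec, dotProduct] at h2 ⊢
      linarith
    linarith
  rcases Nat.eq_zero_or_pos n with hn | hn
  · have : x - y = 0 := by
      subst hn; exact Subsingleton.elim _ _
    simp [this, norm_nonneg]
  · have : Nonempty (Fin n) := ⟨⟨0, hn⟩⟩
    obtain ⟨i₀, hi₀⟩ := Finite.exists_max fun i => ‖(x - y) i‖
    have hnx : ‖x - y‖ ≤ ‖(x - y) i₀‖ :=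
      (pi_norm_le_iff_of_nonneg (norm_nonneg _)).2 hi₀
    have hxy0 : 0 ≤ x i₀ - y i₀ := sub_nonneg.2 (hx i₀)
    have habs : ‖(x - y) i₀‖ = x i₀ - y i₀ := by
      simp [Real.norm_eq_abs, abs_of_nonneg hxy0]
    calc c * ‖x - y‖ ≤ c * (x i₀ - y i₀) := by
          nlinarith [hnx, habs]
      _ ≤ h x i₀ - y i₀ := key i₀
      _ ≤ ‖(h x - y) i₀‖ := by
          simp only [Pi.sub_apply]; exact le_abs_self _
      _ ≤ ‖h x - y‖ := norm_le_pi_norm _ i₀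
end

section
/- Let g : ℝⁿ → ℝⁿ be monotone nondecreasing for the componentwise order and such that each component g_i does not depend on the i-th variable (if x and y agree in all coordinates except possibly the i-th, then g_i(x) = g_i(y)). Let x⁺ ∈ ℝⁿ satisfy g(x⁺) = x⁺. Suppose x ∈ ℝⁿ satisfies x ≥ g(x) and x ≥ x⁺, and for some index i define x' by x'_i = g_i(x) and x'_j = x_j for all j ≠ i. Then x' ≤ x, x' ≥ x⁺, and x' ≥ g(x'). -/
/-- One step of the selective update: if `g` is monotone nondecreasing, each
component `gᵢ` does not depend on the `i`-th variable, `x⁺` is a fixed point of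
`g`, and `x` satisfies `x ≥ g x` and `x ≥ x⁺`, then updating the `i`-th
coordinate of `x` to `gᵢ(x)` yields `x'` with `x' ≤ x`, `x' ≥ x⁺` and
`x' ≥ g x'`. -/
theorem selective_update_step (n : ℕ)
    (g : (Fin n → ℝ) → (Fin n → ℝ)) (hg : Monotone g)
    (hind : ∀ (i : Fin n) (x y : Fin n → ℝ),
      (∀ j, j ≠ i → x j = y j) → g x i = g y i)
    (xplus : Fin n → ℝ) (hfix : g xplus = xplus)
    (x : Fin n → ℝ) (hx1 : g x ≤ x) (hx2 : xplus ≤ x)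
    (i : Fin n) (x' : Fin n → ℝ)
    (hx' : x' = Function.update x i (g x i)) :
    x' ≤ x ∧ xplus ≤ x' ∧ g x' ≤ x' := by
  subst hx'
  have hle : Function.update x i (g x i) ≤ x := by
    intro j
    rcases eq_or_ne j i with rfl | h
    · simpa using hx1 j
    · simp [Function.update_of_ne h]
  refine ⟨hle, ?_, ?_⟩
  · intro j
    rcases eq_or_ne j i with rfl | h
    · simp only [Function.update_self]
      calc xplus j = g xplus j := by rw [hfix]
        _ ≤ g x j := hg hx2 j
    · simpa [Function.update_of_ne h] using hx2 j
  · intro j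
    rcases eq_or_ne j i with rfl | h
    · have : g (Function.update x j (g x j)) j = g x j := by
        apply hind
        intro k hk
        simp [Function.update_of_ne hk]
      simp [this]
    · calc g (Function.update x i (g x i)) j ≤ g x j := hg hle j
        _ ≤ x j := hx1 j
        _ = Function.update x i (g x i) j := by simp [Function.update_of_ne h]
end
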